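/- arXiv:1803.07668 — 2 statements merged into one kernel-verified Lean document; each statement's English description precedes it below -/
import Mathlib

section
/- There is an absolute constant C > 0 such that for every d > 0, every k ∈ ℕ, every x ∈ ℝ and every t > 0, the function g_d(x,t) = (4π(t+d))^{−1/2} e^{−x²/(4(t+d))} satisfies |∂_t^k g_d(x,t)| ≤ C · 2^{−k} · t^{−(k+1/2)} · √((2k)!). -/
open MeasureTheory Real

noncomputable section

/-- `g_d(x,t) = (4π(t+d))^{-1/2} e^{-x²/(4(t+d))}`. -/
def gd (d x t : ℝ) : ℝ :=
  (Real.sqrt (4 * π * (t + d)))⁻¹ * Real.exp (-(x^2 / (4 * (t + d))))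

/-- `F_d(x,t) = (4πt)^{-1/2} g_d(x,t)`. -/
def Fd (d x t : ℝ) : ℝ := (Real.sqrt (4 * π * t))⁻¹ * gd d x t

/-!
The heat kernel `h(x, s) = (4πs)^{-1/2} e^{-x²/(4s)}` is the Fourier integral
`(2π)⁻¹ ∫ e^{-sξ²} cos(xξ) dξ`. Differentiating `k` times in `s` under the integral sign gives
`(2π)⁻¹ ∫ (-ξ²)^k e^{-sξ²} cos(xξ) dξ`, which is bounded by the Gaussian moment
`(2π)⁻¹ ∫ ξ^{2k} e^{-sξ²} dξ = (2π)⁻¹ Γ(k + 1/2) s^{-(k+1/2)}`.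
Finally `Γ(k + 1/2) = (2k-1)‼ √π / 2^k` and `((2k-1)‼)² ≤ (2k)!`, and `g_d(x, t) = h(x, t + d)`
with `t + d ≥ t`; this gives the claim with `C = (2√π)⁻¹`.
-/

open scoped Nat

theorem Nat.doubleFactorial_le_doubleFactorial_succ : ∀ n : ℕ, n‼ ≤ (n + 1)‼
  | 0 => le_rfl
  | 1 => by decide
  | n + 2 => by
    rw [Nat.doubleFactorial_add_two, Nat.doubleFactorial_add_two]
    exact Nat.mul_le_mul (by omega) (Nat.doubleFactorial_le_doubleFactorial_succ n)

theorem Nat.doubleFactorial_sq_le_factorial_succ (n : ℕ) : n‼ ^ 2 ≤ (n + 1)! := by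
  rw [Nat.factorial_eq_mul_doubleFactorial, sq]
  exact Nat.mul_le_mul_right _ (Nat.doubleFactorial_le_doubleFactorial_succ n)

theorem Real.Gamma_nat_add_half_le (k : ℕ) :
    Gamma (k + 1 / 2) ≤ √π * (1 / 2) ^ k * √((2 * k).factorial : ℝ) := by
  have hsq : (((2 * k - 1)‼ : ℕ) : ℝ) ≤ √((2 * k).factorial : ℝ) := by
    rw [Real.le_sqrt (by positivity) (by positivity)]
    rcases k with _ | k
    · simp
    · rw [show 2 * (k + 1) = 2 * k + 1 + 1 by ring, Nat.add_sub_cancel]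
      exact_mod_cast Nat.doubleFactorial_sq_le_factorial_succ (2 * k + 1)
  rw [Gamma_nat_add_half, one_div_pow, div_eq_mul_one_div]
  calc ((2 * k - 1)‼ : ℝ) * √π * (1 / 2 ^ k) = √π * (1 / 2 ^ k) * (2 * k - 1)‼ := by ring
    _ ≤ √π * (1 / 2 ^ k) * √((2 * k).factorial : ℝ) := by gcongr

theorem integrable_pow_mul_exp_neg_mul_sq (n : ℕ) {b : ℝ} (hb : 0 < b) :
    Integrable fun ξ : ℝ => ξ ^ n * exp (-b * ξ ^ 2) := by
  simpa [Real.rpow_natCast] using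
    integrable_rpow_mul_exp_neg_mul_sq hb (s := n) (by linarith [n.cast_nonneg (α := ℝ)])

theorem integral_pow_two_mul_mul_exp_neg_mul_sq (k : ℕ) {b : ℝ} (hb : 0 < b) :
    ∫ ξ : ℝ, ξ ^ (2 * k) * exp (-b * ξ ^ 2) = Gamma (k + 1 / 2) * b ^ (-((k : ℝ) + 1 / 2)) := by
  have heven : ∫ ξ : ℝ, ξ ^ (2 * k) * exp (-b * ξ ^ 2)
      = 2 * ∫ ξ in Set.Ioi (0 : ℝ), ξ ^ ((2 * k : ℕ) : ℝ) * exp (-b * ξ ^ ((2 : ℕ) : ℝ)) := by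
    simp only [Real.rpow_natCast]
    rw [← integral_comp_abs (f := fun ξ => ξ ^ (2 * k) * exp (-b * ξ ^ 2))]
    simp only [pow_mul, sq_abs]
  have hq : (-1 : ℝ) < (2 * k : ℕ) := by linarith [(2 * k).cast_nonneg (α := ℝ)]
  rw [heven, integral_rpow_mul_exp_neg_mul_rpow (by norm_num) hq hb]
  rw [show (((2 * k : ℕ) : ℝ) + 1) / ((2 : ℕ) : ℝ) = k + 1 / 2 by push_cast; ring,
    show -(((2 * k : ℕ) : ℝ) + 1) / ((2 : ℕ) : ℝ) = -(k + 1 / 2) by push_cast; ring]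
  ring

def heatKernel (x s : ℝ) : ℝ := (√(4 * π * s))⁻¹ * exp (-(x ^ 2 / (4 * s)))

open Complex in
theorem heatKernel_eq_integral (x : ℝ) {s : ℝ} (hs : 0 < s) :
    heatKernel x s = (2 * π)⁻¹ * ∫ ξ : ℝ, Real.exp (-s * ξ ^ 2) * Real.cos (x * ξ) := by
  have hs' : 0 < (s : ℂ).re := by simpa using hs
  have hre (ξ : ℝ) : (cexp (I * x * ξ) * cexp (-(s : ℂ) * ξ ^ 2)).re
      = Real.exp (-s * ξ ^ 2) * Real.cos (x * ξ) := by
    rw [← Complex.exp_add, Complex.exp_re]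
    simp [← Complex.ofReal_pow]
  have hint : Integrable fun ξ : ℝ => cexp (I * x * ξ) * cexp (-(s : ℂ) * ξ ^ 2) :=
    (integrable_cexp_quadratic hs' (I * x) 0).congr <| .of_forall fun ξ => by
      simp only [add_zero, Complex.exp_add]
      ring
  have hfourier : ∫ ξ : ℝ, Real.exp (-s * ξ ^ 2) * Real.cos (x * ξ)
      = ((π / s : ℂ) ^ (1 / 2 : ℂ) * cexp (-(x : ℂ) ^ 2 / (4 * s))).re := by
    rw [← fourierIntegral_gaussian hs', ← RCLike.re_to_complex, ← integral_re hint]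
    simp only [RCLike.re_to_complex, hre]
  have hsqrt : (π / s : ℂ) ^ (1 / 2 : ℂ) = ((√(π / s) : ℝ) : ℂ) := by
    rw [Real.sqrt_eq_rpow, ← Complex.ofReal_div, Complex.ofReal_cpow (by positivity)]
    norm_num
  have hexp : cexp (-(x : ℂ) ^ 2 / (4 * s)) = ((Real.exp (-(x ^ 2 / (4 * s))) : ℝ) : ℂ) := by
    rw [Complex.ofReal_exp]
    push_cast
    ring_nf
  rw [hfourier, hsqrt, hexp, ← Complex.ofReal_mul, Complex.ofReal_re, heatKernel,
    Real.sqrt_div' _ hs.le, show 4 * π * s = 2 ^ 2 * (π * s) by ring, Real.sqrt_mul (by positivity),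
    Real.sqrt_sq two_pos.le, Real.sqrt_mul pi_pos.le]
  field_simp
  rw [Real.sq_sqrt pi_pos.le]

def heatIntegrand (x : ℝ) (k : ℕ) (s ξ : ℝ) : ℝ :=
  (-ξ ^ 2) ^ k * Real.exp (-s * ξ ^ 2) * Real.cos (x * ξ)

theorem continuous_heatIntegrand (x : ℝ) (k : ℕ) (s : ℝ) : Continuous (heatIntegrand x k s) := by
  unfold heatIntegrand
  fun_prop

theorem abs_heatIntegrand_le (x : ℝ) (k : ℕ) (s ξ : ℝ) :
    |heatIntegrand x k s ξ| ≤ ξ ^ (2 * k) * Real.exp (-s * ξ ^ 2) := by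
  rw [heatIntegrand, abs_mul, abs_mul, abs_pow, abs_neg, abs_of_nonneg (sq_nonneg ξ), ← pow_mul,
    abs_of_pos (exp_pos _)]
  exact mul_le_of_le_one_right
    (mul_nonneg ((even_two_mul k).pow_nonneg ξ) (exp_pos _).le) (abs_cos_le_one _)

theorem integrable_heatIntegrand (x : ℝ) (k : ℕ) {s : ℝ} (hs : 0 < s) :
    Integrable (heatIntegrand x k s) :=
  (integrable_pow_mul_exp_neg_mul_sq (2 * k) hs).mono'
    (continuous_heatIntegrand x k s).aestronglyMeasurable
    (.of_forall (abs_heatIntegrand_le x k s))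

theorem hasDerivAt_heatIntegrand (x : ℝ) (k : ℕ) (s ξ : ℝ) :
    HasDerivAt (fun s => heatIntegrand x k s ξ) (heatIntegrand x (k + 1) s ξ) s := by
  have hexp : HasDerivAt (fun s => Real.exp (-s * ξ ^ 2)) (Real.exp (-s * ξ ^ 2) * -ξ ^ 2) s :=
    ((hasDerivAt_neg' s).mul_const (ξ ^ 2)).exp.congr_deriv (by ring)
  exact ((hexp.const_mul _).mul_const _).congr_deriv (by simp only [heatIntegrand]; ring)

theorem hasDerivAt_integral_heatIntegrand (x : ℝ) (k : ℕ) {s : ℝ} (hs : 0 < s) :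
    HasDerivAt (fun s => ∫ ξ, heatIntegrand x k s ξ) (∫ ξ, heatIntegrand x (k + 1) s ξ) s := by
  refine (hasDerivAt_integral_of_dominated_loc_of_deriv_le (Ioi_mem_nhds (half_lt_self hs))
    (.of_forall fun s => (continuous_heatIntegrand x k s).aestronglyMeasurable)
    (integrable_heatIntegrand x k hs) (continuous_heatIntegrand x (k + 1) s).aestronglyMeasurable
    (bound := fun ξ => ξ ^ (2 * (k + 1)) * Real.exp (-(s / 2) * ξ ^ 2)) ?_
    (integrable_pow_mul_exp_neg_mul_sq _ (half_pos hs))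
    (.of_forall fun ξ s _ => hasDerivAt_heatIntegrand x k s ξ)).2
  refine .of_forall fun ξ s' (hs' : s / 2 < s') => (abs_heatIntegrand_le x (k + 1) s' ξ).trans ?_
  gcongr
  exact (even_two_mul _).pow_nonneg ξ

theorem iteratedDeriv_heatKernel (x : ℝ) (k : ℕ) {s : ℝ} (hs : 0 < s) :
    iteratedDeriv k (heatKernel x) s = (2 * π)⁻¹ * ∫ ξ, heatIntegrand x k s ξ := by
  induction k generalizing s with
  | zero => simp [heatKernel_eq_integral x hs, heatIntegrand]
  | succ k ih =>
    have hloc : iteratedDeriv k (heatKernel x) =ᶠ[nhds s]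
        fun s => (2 * π)⁻¹ * ∫ ξ, heatIntegrand x k s ξ :=
      Filter.eventually_of_mem (Ioi_mem_nhds hs) fun _ => ih
    rw [iteratedDeriv_succ, hloc.deriv_eq,
      ((hasDerivAt_integral_heatIntegrand x k hs).const_mul _).deriv]

theorem abs_iteratedDeriv_heatKernel_le (x : ℝ) (k : ℕ) {s : ℝ} (hs : 0 < s) :
    |iteratedDeriv k (heatKernel x) s| ≤ (2 * π)⁻¹ * Gamma (k + 1 / 2) * s ^ (-((k : ℝ) + 1 / 2)) := by
  rw [iteratedDeriv_heatKernel x k hs, abs_mul, abs_of_pos (by positivity), mul_assoc,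
    ← integral_pow_two_mul_mul_exp_neg_mul_sq k hs]
  gcongr
  exact abs_integral_le_integral_abs.trans (integral_mono (integrable_heatIntegrand x k hs).abs
    (integrable_pow_mul_exp_neg_mul_sq _ hs) (abs_heatIntegrand_le x k s))

/-- Cramer-inequality bound on the time derivatives of `g_d`
(equation (3.27) of the paper). -/
theorem stmt14 :
    ∃ C > 0, ∀ d : ℝ, 0 < d → ∀ k : ℕ, ∀ x : ℝ, ∀ t : ℝ, 0 < t →
      |iteratedDeriv k (fun t' => gd d x t') t| ≤
        C * ((1:ℝ)/2)^k * t ^ (-((k:ℝ) + 1/2)) *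
          Real.sqrt ((2 * k).factorial) := by
  refine ⟨(2 * π)⁻¹ * √π, by positivity, fun d hd k x t ht => ?_⟩
  have htd : 0 < t + d := by linarith
  have hshift : iteratedDeriv k (fun t' => gd d x t') t = iteratedDeriv k (heatKernel x) (t + d) :=
    congrFun (iteratedDeriv_comp_add_const k (heatKernel x) d) t
  have hdecay : (t + d) ^ (-((k : ℝ) + 1 / 2)) ≤ t ^ (-((k : ℝ) + 1 / 2)) :=
    rpow_le_rpow_of_nonpos ht (by linarith) (by linarith [k.cast_nonneg (α := ℝ)])
  rw [hshift]
  calc _ ≤ (2 * π)⁻¹ * Gamma (k + 1 / 2) * (t + d) ^ (-((k : ℝ) + 1 / 2)) :=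
        abs_iteratedDeriv_heatKernel_le x k htd
    _ ≤ (2 * π)⁻¹ * (√π * (1 / 2) ^ k * √((2 * k).factorial : ℝ)) * t ^ (-((k : ℝ) + 1 / 2)) := by
        gcongr
        exact Real.Gamma_nat_add_half_le k
    _ = _ := by ring
end
end

section
/- There is an absolute constant C > 0 such that for every d > 0, every n ≥ 1, every x ∈ ℝ and every t > 0, the function F_d(x,t) = (4πt)^{−1/2} · (4π(t+d))^{−1/2} · e^{−x²/(4(t+d))} satisfies |∂_t^{2n} F_d(x,t)| ≤ C · n^{1/4} · (2n)! · t^{−(2n+1)}. -/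
open MeasureTheory Real

noncomputable section

/-!
Write `A(t) = (4πt)^{-1/2}`. Both factors of `F_d = A g_d` are Gaussian integrals:
`A(t) = (2π)⁻¹ ∫ e^{-tξ²} dξ` and `g_d(x,t) = (2π)⁻¹ ∫ cos(xξ) e^{-(t+d)ξ²} dξ`.
Differentiating under the integral sign, `∂ₜᵏ` of either one is
`(2π)⁻¹ (-1)ᵏ ∫ ξ²ᵏ w(ξ) e^{-sξ²} dξ` with `|w| ≤ 1` and `s ≥ t`, hence `|∂ₜᵏ g_d| ≤ (-1)ᵏ ∂ₜᵏ A`.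
By Leibniz' rule, `|∂ₜᴺ F_d| ≤ ∑ (N choose i) |A⁽ⁱ⁾| |A⁽ᴺ⁻ⁱ⁾| = (-1)ᴺ ∂ₜᴺ (A²)`, and `A² = (4πt)⁻¹`,
so `|∂ₜᴺ F_d(x,t)| ≤ N! / (4π t^{N+1})`.
-/

open Filter Set Topology

section DerivativeTower

variable {𝕜 F : Type*} [NontriviallyNormedField 𝕜] [NormedAddCommGroup F] [NormedSpace 𝕜 F]
  {U : Set 𝕜} {f : ℕ → 𝕜 → F}

theorem iteratedDeriv_eqOn_of_hasDerivAt_succ (hU : IsOpen U)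
    (hf : ∀ k, ∀ x ∈ U, HasDerivAt (f k) (f (k + 1) x) x) (k : ℕ) :
    EqOn (iteratedDeriv k (f 0)) (f k) U := by
  induction k with
  | zero => simp [EqOn]
  | succ k ih =>
    intro x hx
    rw [iteratedDeriv_succ, (ih.eventuallyEq_of_mem (hU.mem_nhds hx)).deriv_eq, (hf k x hx).deriv]

theorem contDiffOn_of_hasDerivAt_succ (hU : IsOpen U)
    (hf : ∀ k, ∀ x ∈ U, HasDerivAt (f k) (f (k + 1) x) x) (n k : ℕ) :
    ContDiffOn 𝕜 n (f k) U := by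
  induction n generalizing k with
  | zero => exact contDiffOn_zero.2 fun x hx => (hf k x hx).continuousAt.continuousWithinAt
  | succ n ih =>
    rw [Nat.cast_succ, contDiffOn_succ_iff_deriv_of_isOpen hU]
    exact ⟨fun x hx => (hf k x hx).differentiableAt.differentiableWithinAt, by simp,
      (ih (k + 1)).congr fun x hx => (hf k x hx).deriv⟩

end DerivativeTower

/-- The derivatives of `f` alternate in sign, so every Leibniz term of `(f * f)⁽ⁿ⁾` has sign
`(-1) ^ n`. -/
theorem abs_iteratedDeriv_mul_le {f g : ℝ → ℝ} {x : ℝ} {n : ℕ}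
    (hf : ContDiffAt ℝ n f x) (hg : ContDiffAt ℝ n g x)
    (hfg : ∀ k ≤ n, |iteratedDeriv k g x| ≤ (-1) ^ k * iteratedDeriv k f x) :
    |iteratedDeriv n (fun y => f y * g y) x| ≤
      (-1) ^ n * iteratedDeriv n (fun y => f y * f y) x := by
  have habs : ∀ k ≤ n, |iteratedDeriv k f x| = (-1) ^ k * iteratedDeriv k f x := by
    intro k hk
    have hpos := (abs_nonneg _).trans (hfg k hk)
    rw [← abs_of_nonneg hpos, abs_mul, abs_pow, abs_neg, abs_one, one_pow, one_mul]
  rw [iteratedDeriv_fun_mul hf hg, iteratedDeriv_fun_mul hf hf, Finset.mul_sum]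
  refine (Finset.abs_sum_le_sum_abs _ _).trans (Finset.sum_le_sum fun i hi => ?_)
  have hi : i ≤ n := Nat.lt_succ_iff.mp (Finset.mem_range.mp hi)
  have hsign : ((-1 : ℝ) ^ n) = (-1) ^ i * (-1) ^ (n - i) := by
    rw [← pow_add, Nat.add_sub_cancel' hi]
  rw [abs_mul, abs_mul, Nat.abs_cast, habs i hi, hsign]
  calc (n.choose i : ℝ) * ((-1) ^ i * iteratedDeriv i f x) * |iteratedDeriv (n - i) g x|
      ≤ (n.choose i : ℝ) * ((-1) ^ i * iteratedDeriv i f x) *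
          ((-1) ^ (n - i) * iteratedDeriv (n - i) f x) := by
        gcongr
        · rw [← habs i hi]; positivity
        · exact hfg _ (Nat.sub_le n i)
    _ = _ := by ring

section GaussMoment

variable {w : ℝ → ℝ}

def gaussMoment (w : ℝ → ℝ) (j : ℕ) (s : ℝ) : ℝ :=
  ∫ ξ : ℝ, (ξ ^ 2) ^ j * w ξ * exp (-s * ξ ^ 2)

theorem integrable_sq_pow_mul_exp_neg_mul_sq (j : ℕ) {b : ℝ} (hb : 0 < b) :
    Integrable fun ξ : ℝ => (ξ ^ 2) ^ j * exp (-b * ξ ^ 2) := by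
  have h := integrable_rpow_mul_exp_neg_mul_sq hb (s := ((2 * j : ℕ) : ℝ))
    (lt_of_lt_of_le neg_one_lt_zero (Nat.cast_nonneg _))
  simpa only [rpow_natCast, pow_mul] using h

theorem abs_sq_pow_mul_mul_exp_le (hwb : ∀ ξ, |w ξ| ≤ 1) (j : ℕ) (s ξ : ℝ) :
    |(ξ ^ 2) ^ j * w ξ * exp (-s * ξ ^ 2)| ≤ (ξ ^ 2) ^ j * exp (-s * ξ ^ 2) := by
  have hpow : 0 ≤ (ξ ^ 2) ^ j := by positivity
  rw [abs_mul, abs_mul, abs_of_nonneg hpow, abs_of_pos (exp_pos _)]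
  exact mul_le_mul_of_nonneg_right (mul_le_of_le_one_right hpow (hwb ξ)) (exp_pos _).le

theorem aestronglyMeasurable_sq_pow_mul_mul_exp (hw : AEStronglyMeasurable w) (j : ℕ) (s : ℝ) :
    AEStronglyMeasurable fun ξ : ℝ => (ξ ^ 2) ^ j * w ξ * exp (-s * ξ ^ 2) :=
  ((continuous_pow 2).pow j).aestronglyMeasurable.mul hw |>.mul
    (by fun_prop : Continuous fun ξ : ℝ => exp (-s * ξ ^ 2)).aestronglyMeasurable

theorem integrable_sq_pow_mul_mul_exp (hw : AEStronglyMeasurable w) (hwb : ∀ ξ, |w ξ| ≤ 1)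
    (j : ℕ) {s : ℝ} (hs : 0 < s) :
    Integrable fun ξ : ℝ => (ξ ^ 2) ^ j * w ξ * exp (-s * ξ ^ 2) :=
  (integrable_sq_pow_mul_exp_neg_mul_sq j hs).mono' (aestronglyMeasurable_sq_pow_mul_mul_exp hw j s)
    (Eventually.of_forall (abs_sq_pow_mul_mul_exp_le hwb j s))

theorem hasDerivAt_gaussMoment (hw : AEStronglyMeasurable w) (hwb : ∀ ξ, |w ξ| ≤ 1) (j : ℕ)
    {s : ℝ} (hs : 0 < s) :
    HasDerivAt (gaussMoment w j) (-gaussMoment w (j + 1) s) s := by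
  have key := hasDerivAt_integral_of_dominated_loc_of_deriv_le (μ := volume)
    (F := fun s' ξ => (ξ ^ 2) ^ j * w ξ * exp (-s' * ξ ^ 2))
    (F' := fun s' ξ => -((ξ ^ 2) ^ (j + 1) * w ξ * exp (-s' * ξ ^ 2)))
    (bound := fun ξ => (ξ ^ 2) ^ (j + 1) * exp (-(s / 2) * ξ ^ 2))
    (Metric.ball_mem_nhds s (half_pos hs))
    (Eventually.of_forall (aestronglyMeasurable_sq_pow_mul_mul_exp hw j))
    (integrable_sq_pow_mul_mul_exp hw hwb j hs)
    (aestronglyMeasurable_sq_pow_mul_mul_exp hw (j + 1) s).neg ?_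
    (integrable_sq_pow_mul_exp_neg_mul_sq (j + 1) (half_pos hs)) ?_
  · unfold gaussMoment
    rw [← integral_neg]
    exact key.2
  · refine Eventually.of_forall fun ξ s' hs' => ?_
    have hs' : s / 2 ≤ s' := by
      rw [Metric.mem_ball, dist_eq, abs_sub_lt_iff] at hs'
      linarith
    rw [norm_neg, norm_eq_abs]
    refine (abs_sq_pow_mul_mul_exp_le hwb (j + 1) s' ξ).trans ?_
    gcongr
  · refine Eventually.of_forall fun ξ s' _ => ?_
    have h := ((hasDerivAt_id s').neg.mul_const (ξ ^ 2)).exp.const_mul ((ξ ^ 2) ^ j * w ξ)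
    refine h.congr_deriv ?_
    simp only [Pi.neg_apply, id]
    ring

theorem hasDerivAt_neg_one_pow_mul_gaussMoment (hw : AEStronglyMeasurable w)
    (hwb : ∀ ξ, |w ξ| ≤ 1) (k : ℕ) {s : ℝ} (hs : 0 < s) :
    HasDerivAt (fun s => (-1) ^ k * gaussMoment w k s)
      ((-1) ^ (k + 1) * gaussMoment w (k + 1) s) s := by
  refine ((hasDerivAt_gaussMoment hw hwb k hs).const_mul ((-1 : ℝ) ^ k)).congr_deriv ?_
  ring

theorem iteratedDeriv_gaussMoment_zero (hw : AEStronglyMeasurable w) (hwb : ∀ ξ, |w ξ| ≤ 1)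
    (k : ℕ) {s : ℝ} (hs : 0 < s) :
    iteratedDeriv k (gaussMoment w 0) s = (-1) ^ k * gaussMoment w k s := by
  have h := iteratedDeriv_eqOn_of_hasDerivAt_succ isOpen_Ioi
    (fun k s hs => hasDerivAt_neg_one_pow_mul_gaussMoment hw hwb k (mem_Ioi.mp hs)) k hs
  simpa using h

theorem contDiffOn_gaussMoment_zero (hw : AEStronglyMeasurable w) (hwb : ∀ ξ, |w ξ| ≤ 1)
    (n : ℕ) : ContDiffOn ℝ n (gaussMoment w 0) (Ioi 0) := by
  have h := contDiffOn_of_hasDerivAt_succ isOpen_Ioi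
    (fun k s hs => hasDerivAt_neg_one_pow_mul_gaussMoment hw hwb k (mem_Ioi.mp hs)) n 0
  simpa using h

theorem abs_gaussMoment_le (hw : AEStronglyMeasurable w) (hwb : ∀ ξ, |w ξ| ≤ 1) (j : ℕ)
    {s : ℝ} (hs : 0 < s) : |gaussMoment w j s| ≤ gaussMoment 1 j s := by
  rw [← norm_eq_abs]
  refine (norm_integral_le_integral_norm _).trans (integral_mono
    (integrable_sq_pow_mul_mul_exp hw hwb j hs).norm
    (integrable_sq_pow_mul_exp_neg_mul_sq j hs) fun ξ => ?_) |>.trans_eq ?_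
  · exact abs_sq_pow_mul_mul_exp_le hwb j s ξ
  · simp [gaussMoment]

theorem gaussMoment_one_antitoneOn (j : ℕ) : AntitoneOn (gaussMoment 1 j) (Ioi 0) := by
  intro s hs s' _ hss'
  simp only [gaussMoment, Pi.one_apply, mul_one]
  refine integral_mono (integrable_sq_pow_mul_exp_neg_mul_sq j (hs.out.trans_le hss'))
    (integrable_sq_pow_mul_exp_neg_mul_sq j hs.out) fun ξ => ?_
  gcongr

theorem gaussMoment_one_zero (s : ℝ) : gaussMoment 1 0 s = √(π / s) := by
  simp only [gaussMoment, pow_zero, Pi.one_apply, mul_one, one_mul, integral_gaussian]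

theorem gaussMoment_cos_zero (x : ℝ) {s : ℝ} (hs : 0 < s) :
    gaussMoment (fun ξ => cos (x * ξ)) 0 s = √(π / s) * exp (-(x ^ 2 / (4 * s))) := by
  have hsre : 0 < (s : ℂ).re := by simpa using hs
  have hint : Integrable fun ξ : ℝ =>
      Complex.exp (Complex.I * x * ξ) * Complex.exp (-(s : ℂ) * ξ ^ 2) := by
    refine (integrable_cexp_quadratic hsre (Complex.I * x) 0).congr
      (Eventually.of_forall fun ξ => ?_)
    simp only [← Complex.exp_add]
    ring_nf
  have hre : ∀ ξ : ℝ, (Complex.exp (Complex.I * x * ξ) * Complex.exp (-(s : ℂ) * ξ ^ 2)).re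
      = (ξ ^ 2) ^ 0 * cos (x * ξ) * exp (-s * ξ ^ 2) := by
    intro ξ
    rw [← Complex.exp_add, Complex.exp_re]
    simp [← Complex.ofReal_pow]
    ring
  have hrhs : (((π : ℂ) / s) ^ (1 / 2 : ℂ) * Complex.exp (-(x : ℂ) ^ 2 / (4 * s))).re
      = √(π / s) * exp (-(x ^ 2 / (4 * s))) := by
    have h1 : (π : ℂ) / s = ((π / s : ℝ) : ℂ) := by push_cast; ring
    have h2 : (1 / 2 : ℂ) = ((1 / 2 : ℝ) : ℂ) := by push_cast; ring
    have h3 : -(x : ℂ) ^ 2 / (4 * s) = ((-(x ^ 2 / (4 * s)) : ℝ) : ℂ) := by push_cast; ring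
    rw [h1, h2, h3, ← Complex.ofReal_cpow (by positivity), ← Complex.ofReal_exp,
      ← Complex.ofReal_mul, Complex.ofReal_re, ← sqrt_eq_rpow]
  rw [← hrhs, ← fourierIntegral_gaussian hsre, ← RCLike.re_to_complex, ← integral_re hint]
  simp only [RCLike.re_to_complex, hre, gaussMoment]

end GaussMoment

theorem inv_sqrt_eq_gaussMoment (s : ℝ) : (√(4 * π * s))⁻¹ = (2 * π)⁻¹ * gaussMoment 1 0 s := by
  have h : 4 * π * s = (2 * π) ^ 2 * (π / s)⁻¹ := by
    rw [inv_div]; field_simp; ring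
  rw [gaussMoment_one_zero, h, sqrt_mul (by positivity), sqrt_sq (by positivity), sqrt_inv,
    mul_inv, inv_inv]

def heatProfile (w : ℝ → ℝ) (a t : ℝ) : ℝ := (2 * π)⁻¹ * gaussMoment w 0 (t + a)

section HeatProfile

variable {w : ℝ → ℝ} (hw : AEStronglyMeasurable w) (hwb : ∀ ξ, |w ξ| ≤ 1)
include hw hwb

theorem iteratedDeriv_heatProfile {a t : ℝ} (ht : 0 < t + a) (k : ℕ) :
    iteratedDeriv k (heatProfile w a) t = (2 * π)⁻¹ * ((-1) ^ k * gaussMoment w k (t + a)) := by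
  change iteratedDeriv k (fun u => (2 * π)⁻¹ * gaussMoment w 0 (u + a)) t = _
  rw [iteratedDeriv_const_mul_field, iteratedDeriv_comp_add_const]
  exact congrArg _ (iteratedDeriv_gaussMoment_zero hw hwb k ht)

theorem contDiffAt_heatProfile {a t : ℝ} (ht : 0 < t + a) (n : ℕ) :
    ContDiffAt ℝ n (heatProfile w a) t :=
  contDiffAt_const.mul <| ((contDiffOn_gaussMoment_zero hw hwb n).contDiffAt
    (Ioi_mem_nhds ht)).comp (f := fun u => u + a) t (by fun_prop)

theorem abs_iteratedDeriv_heatProfile_le {a t : ℝ} (ha : 0 ≤ a) (ht : 0 < t) (k : ℕ) :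
    |iteratedDeriv k (heatProfile w a) t| ≤ (-1) ^ k * iteratedDeriv k (heatProfile 1 0) t := by
  have hta : 0 < t + a := by linarith
  have hsq : (-1 : ℝ) ^ k * (-1) ^ k = 1 := by rw [← mul_pow, neg_one_mul, neg_neg, one_pow]
  rw [iteratedDeriv_heatProfile hw hwb hta, iteratedDeriv_heatProfile (w := 1)
    aestronglyMeasurable_one (by simp) (by simpa using ht), add_zero]
  calc |(2 * π)⁻¹ * ((-1) ^ k * gaussMoment w k (t + a))|
      = (2 * π)⁻¹ * |gaussMoment w k (t + a)| := by
        rw [abs_mul, abs_mul, abs_neg_one_pow, one_mul, abs_of_pos (by positivity)]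
    _ ≤ (2 * π)⁻¹ * gaussMoment 1 k t := by
        gcongr
        exact (abs_gaussMoment_le hw hwb k hta).trans
          (gaussMoment_one_antitoneOn k ht (hta : t + a ∈ Ioi 0) (by linarith))
    _ = (-1) ^ k * ((2 * π)⁻¹ * ((-1) ^ k * gaussMoment 1 k t)) := by
        rw [mul_left_comm, ← mul_assoc ((-1 : ℝ) ^ k), hsq, one_mul]

end HeatProfile

theorem inv_sqrt_eq_heatProfile : (fun s => (√(4 * π * s))⁻¹) = heatProfile 1 0 := by
  funext s
  rw [heatProfile, add_zero, inv_sqrt_eq_gaussMoment]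

theorem gd_eq_heatProfile {d x t : ℝ} (ht : 0 < t + d) :
    gd d x t = heatProfile (fun ξ => cos (x * ξ)) d t := by
  rw [gd, heatProfile, gaussMoment_cos_zero x ht, inv_sqrt_eq_gaussMoment, gaussMoment_one_zero,
    mul_assoc]

theorem heatProfile_one_mul_self_eventuallyEq {t : ℝ} (ht : 0 < t) :
    (fun u => heatProfile 1 0 u * heatProfile 1 0 u) =ᶠ[𝓝 t] fun u => (4 * π)⁻¹ * u⁻¹ := by
  filter_upwards [Ioi_mem_nhds ht] with u hu
  rw [← inv_sqrt_eq_heatProfile, ← mul_inv, mul_self_sqrt (by positivity [hu.out]), mul_inv]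

theorem iteratedDeriv_const_mul_inv (c : ℝ) (n : ℕ) (t : ℝ) :
    iteratedDeriv n (fun u => c * u⁻¹) t = c * ((-1) ^ n * n.factorial * t ^ (-1 - n : ℤ)) := by
  rw [iteratedDeriv_const_mul_field, iteratedDeriv_eq_iterate, iter_deriv_inv]

theorem abs_iteratedDeriv_Fd_le {d : ℝ} (hd : 0 ≤ d) (x : ℝ) (n : ℕ) {t : ℝ} (ht : 0 < t) :
    |iteratedDeriv n (Fd d x) t| ≤ (4 * π)⁻¹ * n.factorial * (t ^ (n + 1))⁻¹ := by
  have hcos : ∀ ξ, |cos (x * ξ)| ≤ 1 := fun ξ => abs_cos_le_one _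
  have hcosm : AEStronglyMeasurable fun ξ => cos (x * ξ) :=
    (by fun_prop : Continuous fun ξ => cos (x * ξ)).aestronglyMeasurable
  have hFd : Fd d x =ᶠ[𝓝 t]
      fun u => heatProfile 1 0 u * heatProfile (fun ξ => cos (x * ξ)) d u := by
    filter_upwards [Ioi_mem_nhds ht] with u hu
    rw [Fd, gd_eq_heatProfile (by linarith [hu.out]), ← inv_sqrt_eq_heatProfile]
  have hdom := abs_iteratedDeriv_mul_le
    (contDiffAt_heatProfile (w := 1) aestronglyMeasurable_one (by simp) (by simpa using ht) n)
    (contDiffAt_heatProfile hcosm hcos (by linarith) n)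
    fun k _ => abs_iteratedDeriv_heatProfile_le hcosm hcos hd ht k
  have hpow : t ^ (-1 - n : ℤ) = (t ^ (n + 1))⁻¹ := by
    rw [← zpow_natCast, ← zpow_neg]; push_cast; ring_nf
  rw [hFd.iteratedDeriv_eq]
  refine hdom.trans_eq ?_
  rw [(heatProfile_one_mul_self_eventuallyEq ht).iteratedDeriv_eq, iteratedDeriv_const_mul_inv,
    hpow]
  have hsq : (-1 : ℝ) ^ n * (-1) ^ n = 1 := by rw [← mul_pow, neg_one_mul, neg_neg, one_pow]
  linear_combination (4 * π)⁻¹ * n.factorial * (t ^ (n + 1))⁻¹ * hsq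

/-- Bound on the `(2n)`-th time derivative of the integrand `F_d`
(equation (3.30) of the paper). -/
theorem stmt15 :
    ∃ C > 0, ∀ d : ℝ, 0 < d → ∀ n : ℕ, 1 ≤ n → ∀ x : ℝ, ∀ t : ℝ, 0 < t →
      |iteratedDeriv (2 * n) (fun t' => Fd d x t') t| ≤
        C * (n:ℝ) ^ ((1:ℝ)/4) * ((2 * n).factorial : ℝ) * (t ^ (2 * n + 1))⁻¹ := by
  refine ⟨1, one_pos, fun d hd n hn x t ht => (abs_iteratedDeriv_Fd_le hd.le x (2 * n) ht).trans ?_⟩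
  have hpi : (4 * π)⁻¹ ≤ 1 := inv_le_one_of_one_le₀ (by linarith [pi_gt_three])
  have hn : (1 : ℝ) ≤ (n : ℝ) ^ ((1 : ℝ) / 4) := one_le_rpow (by exact_mod_cast hn) (by norm_num)
  rw [one_mul]
  gcongr
  exact hpi.trans hn
end
end
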